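/- The left B-module maps f^{-2}, f^{-1}, f^0 constitute a morphism of complexes lifting right multiplication by z: namely d^{-1}∘f^{-1} = f^0∘d^{-1} as maps B⊗V → B, and d^{-2}∘f^{-2} = f^{-1}∘d^{-2} as maps B⊗kr → B⊗V. -/

import Mathlib

/-!
STATEMENT 6: The left B-module maps f⁻², f⁻¹, f⁰ constitute a morphism of
complexes lifting right multiplication by z: d⁻¹∘f⁻¹ = f⁰∘d⁻¹ as maps B⊗V → B,
and d⁻²∘f⁻² = f⁻¹∘d⁻² as maps B⊗kr → B⊗V (where B⊗kr is identified with the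
free module B via its generator 1⊗r).
-/

open TensorProduct Matrix

noncomputable section

variable (k : Type) [Field k] (n : ℕ)

/-- The standard basis of `V = k^n`. -/
def x (i : Fin n) : Fin n → k := Pi.single i 1

/-- `V̂ = V ⊕ k·z`. -/
abbrev Vhat (k : Type) [Field k] (n : ℕ) := (Fin n → k) × k

/-- The inclusion `V → V̂`. -/
def inc : (Fin n → k) →ₗ[k] Vhat k n := LinearMap.inl k (Fin n → k) k

/-- The extra degree-one generator `z ∈ V̂`. -/
def zv : Vhat k n := (0, 1)

/-- The multiplication embedding `V̂ ⊗ V̂ → T(V̂)`. -/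
def emb2 : (Vhat k n) ⊗[k] (Vhat k n) →ₗ[k] TensorAlgebra k (Vhat k n) :=
  LinearMap.mul' k (TensorAlgebra k (Vhat k n)) ∘ₗ
    TensorProduct.map (TensorAlgebra.ι k) (TensorAlgebra.ι k)

/-- The multiplication embedding `V ⊗ V → T(V)`. -/
def embV : (Fin n → k) ⊗[k] (Fin n → k) →ₗ[k] TensorAlgebra k (Fin n → k) :=
  LinearMap.mul' k (TensorAlgebra k (Fin n → k)) ∘ₗ
    TensorProduct.map (TensorAlgebra.ι k) (TensorAlgebra.ι k)

variable (M : Matrix (Fin n) (Fin n) k)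

/-- The relation `r = Σ m_ij x_i ⊗ x_j` as an element of `T(V)`. -/
def rTV : TensorAlgebra k (Fin n → k) :=
  ∑ i : Fin n, ∑ j : Fin n,
    M i j • (TensorAlgebra.ι k (x k n i) * TensorAlgebra.ι k (x k n j))

/-- The relation `r` viewed inside `T(V̂)`. -/
def rhat : TensorAlgebra k (Vhat k n) :=
  ∑ i : Fin n, ∑ j : Fin n,
    M i j • (TensorAlgebra.ι k (inc k n (x k n i)) * TensorAlgebra.ι k (inc k n (x k n j)))

variable (δ₀ : (Fin n → k) →ₗ[k] (Fin n → k) ⊗[k] (Fin n → k))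

/-- The Ore relation `r_i = z⊗x_i − x_i⊗z − δ(x_i)` inside `T(V̂)`. -/
def relz (i : Fin n) : TensorAlgebra k (Vhat k n) :=
  TensorAlgebra.ι k (zv k n) * TensorAlgebra.ι k (inc k n (x k n i))
    - TensorAlgebra.ι k (inc k n (x k n i)) * TensorAlgebra.ι k (zv k n)
    - emb2 k n (TensorProduct.map (inc k n) (inc k n) (δ₀ (x k n i)))

/-- The defining relations of `B = T(V̂)/⟨r, r₁, …, r_n⟩`. -/
def OreRel (a b : TensorAlgebra k (Vhat k n)) : Prop :=
  (a = rhat k n M ∨ ∃ i : Fin n, a = relz k n δ₀ i) ∧ b = 0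

/-- `B = A[z;δ̄] ≅ T(V̂)/⟨r, r₁, …, r_n⟩`. -/
abbrev B := RingQuot (OreRel k n M δ₀)

/-- The projection `π : T(V̂) → B`. -/
def πB : TensorAlgebra k (Vhat k n) →ₐ[k] B k n M δ₀ :=
  RingQuot.mkAlgHom k (OreRel k n M δ₀)

/-- `u_i = Σ_s m_si x_s`, so that `r = Σ_i u_i ⊗ x_i`. -/
def u (i : Fin n) : Fin n → k := ∑ s : Fin n, M s i • x k n s

/-- The image of `z` in `B`. -/
def zB : B k n M δ₀ := πB k n M δ₀ (TensorAlgebra.ι k (zv k n))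

/-!
In `B` the Ore relations say that `z x̄ - x̄ z` is the image of `δ(x)` for every `x ∈ V`, which is
exactly the first square. For the second square, `d⁻²(f⁻²(1)) - f⁻¹(d⁻²(1))` is the image of
`δ(r) = Σᵢ δ(uᵢ) xᵢ + uᵢ δ(xᵢ) = 0` under the `k`-linear map `T(V) → B ⊗ V`,
`v₁ ⋯ vₘ ↦ v̄₁ ⋯ v̄ₘ₋₁ ⊗ vₘ`, that splits off the last tensor factor.
-/

section LastFactor

variable {R V A : Type*} [CommSemiring R] [AddCommMonoid V] [Module R V] [Semiring A] [Algebra R A]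

/- Words act from the right end, so starting from `(1, 0)` the first coordinate records that no
letter has been read yet, and `m₁ ⋯ mₖ` ends at `(0, g m₁ ⋯ g mₖ₋₁ ⊗ mₖ)`. -/
def lastFactorAction (g : V →ₗ[R] A) : V →ₗ[R] Module.End R (R × (A ⊗[R] V)) :=
  LinearMap.mk₂ R (fun m p => (0, g m • p.2 + p.1 • (1 ⊗ₜ m)))
    (fun m m' p => by simp [tmul_add, smul_add, add_smul]; abel)
    (fun c m p => by simp [tmul_smul, smul_add, smul_assoc, smul_comm c p.1])
    (fun m p p' => by simp [smul_add, add_smul]; abel)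
    (fun c m p => by simp [smul_add, mul_smul, smul_comm (g m) c])

def lastFactor (g : V →ₗ[R] A) : TensorAlgebra R V →ₗ[R] A ⊗[R] V :=
  LinearMap.snd R R _ ∘ₗ LinearMap.applyₗ ((1, 0) : R × (A ⊗[R] V)) ∘ₗ
    (TensorAlgebra.lift R (lastFactorAction g)).toLinearMap

lemma lift_lastFactorAction_zero_fst (g : V →ₗ[R] A) (w : TensorAlgebra R V) (t : A ⊗[R] V) :
    TensorAlgebra.lift R (lastFactorAction g) w (0, t) = (0, TensorAlgebra.lift R g w • t) := by
  induction w using TensorAlgebra.induction generalizing t with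
  | algebraMap r => simp [Algebra.algebraMap_eq_smul_one, smul_assoc]
  | ι m => simp [lastFactorAction]
  | add a b ha hb => simp [ha, hb, add_smul]
  | mul a b ha hb => simp [Module.End.mul_apply, ha, hb, mul_smul]

lemma lastFactor_mul_ι (g : V →ₗ[R] A) (w : TensorAlgebra R V) (m : V) :
    lastFactor g (w * TensorAlgebra.ι R m) = TensorAlgebra.lift R g w ⊗ₜ m := by
  have hm : lastFactorAction g m (1, 0) = (0, 1 ⊗ₜ m) := by simp [lastFactorAction]
  simp [lastFactor, Module.End.mul_apply, hm, lift_lastFactorAction_zero_fst, smul_tmul']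

end LastFactor

lemma map_tmul_eq_smul {R A V N : Type*} [CommSemiring R] [Semiring A] [Algebra R A]
    [AddCommMonoid V] [Module R V] [AddCommMonoid N] [Module A N]
    (f : A ⊗[R] V →ₗ[A] N) (a : A) (m : V) : f (a ⊗ₜ m) = a • f (1 ⊗ₜ m) := by
  rw [← map_smul, smul_tmul', smul_eq_mul, mul_one]

lemma embV_tmul (a b : Fin n → k) :
    embV k n (a ⊗ₜ b) = TensorAlgebra.ι k a * TensorAlgebra.ι k b := by
  simp [embV, LinearMap.mul'_apply]

lemma emb2_tmul (a b : Vhat k n) :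
    emb2 k n (a ⊗ₜ b) = TensorAlgebra.ι k a * TensorAlgebra.ι k b := by
  simp [emb2, LinearMap.mul'_apply]

def xB : (Fin n → k) →ₗ[k] B k n M δ₀ :=
  (πB k n M δ₀).toLinearMap ∘ₗ TensorAlgebra.ι k ∘ₗ inc k n

lemma xB_apply (v : Fin n → k) : xB k n M δ₀ v = πB k n M δ₀ (TensorAlgebra.ι k (inc k n v)) :=
  rfl

lemma lift_xB_embV (t : (Fin n → k) ⊗[k] (Fin n → k)) :
    TensorAlgebra.lift k (xB k n M δ₀) (embV k n t)
      = πB k n M δ₀ (emb2 k n (TensorProduct.map (inc k n) (inc k n) t)) := by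
  induction t using TensorProduct.induction_on with
  | zero => simp
  | tmul a b => simp [embV_tmul, emb2_tmul, xB_apply]
  | add s t hs ht => simp [hs, ht]

lemma zB_mul_xB_sub (v : Fin n → k) :
    zB k n M δ₀ * xB k n M δ₀ v - xB k n M δ₀ v * zB k n M δ₀
      = TensorAlgebra.lift k (xB k n M δ₀) (embV k n (δ₀ v)) := by
  suffices (LinearMap.mulLeft k (zB k n M δ₀) - LinearMap.mulRight k (zB k n M δ₀)) ∘ₗ
      xB k n M δ₀ = (TensorAlgebra.lift k (xB k n M δ₀)).toLinearMap ∘ₗ embV k n ∘ₗ δ₀ from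
    LinearMap.congr_fun this v
  refine (Pi.basisFun k (Fin n)).ext fun i => ?_
  have hrel := RingQuot.mkAlgHom_rel k
    (show OreRel k n M δ₀ (relz k n δ₀ i) 0 from ⟨Or.inr ⟨i, rfl⟩, rfl⟩)
  rw [map_zero, relz, map_sub, map_sub, sub_eq_zero] at hrel
  simpa [lift_xB_embV, xB_apply, zB, πB, x] using hrel

lemma d1_rTensor (d1 : B k n M δ₀ ⊗[k] (Fin n → k) →ₗ[B k n M δ₀] B k n M δ₀)
    (hd1 : ∀ v : Fin n → k,
      d1 ((1 : B k n M δ₀) ⊗ₜ v) = πB k n M δ₀ (TensorAlgebra.ι k (inc k n v)))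
    (t : (Fin n → k) ⊗[k] (Fin n → k)) :
    d1 ((xB k n M δ₀).rTensor (Fin n → k) t) = TensorAlgebra.lift k (xB k n M δ₀) (embV k n t) := by
  induction t using TensorProduct.induction_on with
  | zero => simp
  | tmul a b =>
    rw [LinearMap.rTensor_tmul, map_tmul_eq_smul d1, hd1, ← xB_apply, embV_tmul, map_mul,
      TensorAlgebra.lift_ι_apply, TensorAlgebra.lift_ι_apply, smul_eq_mul]
  | add s t hs ht => simp [hs, ht]

lemma f1_one_tmul (y : Fin n → Fin n → (Fin n → k))
    (hy : ∀ i, δ₀ (x k n i) = ∑ j : Fin n, (y i j) ⊗ₜ (x k n j))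
    (f1 : B k n M δ₀ ⊗[k] (Fin n → k) →ₗ[B k n M δ₀] B k n M δ₀ ⊗[k] (Fin n → k))
    (hf1 : ∀ i : Fin n,
      f1 ((1 : B k n M δ₀) ⊗ₜ x k n i)
        = zB k n M δ₀ ⊗ₜ x k n i
          - ∑ j : Fin n,
              (πB k n M δ₀ (TensorAlgebra.ι k (inc k n (y i j)))) ⊗ₜ x k n j)
    (v : Fin n → k) :
    f1 (1 ⊗ₜ v) = zB k n M δ₀ ⊗ₜ v - (xB k n M δ₀).rTensor (Fin n → k) (δ₀ v) := by
  refine eq_sub_of_add_eq (LinearMap.congr_fun (?_ : f1.restrictScalars k ∘ₗ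
      TensorProduct.mk k _ _ 1 + (xB k n M δ₀).rTensor (Fin n → k) ∘ₗ δ₀
        = TensorProduct.mk k _ _ (zB k n M δ₀)) v)
  refine (Pi.basisFun k (Fin n)).ext fun i => ?_
  simp only [LinearMap.add_apply, LinearMap.comp_apply, LinearMap.restrictScalars_apply,
    TensorProduct.mk_apply]
  rw [Pi.basisFun_apply, ← x, hf1, hy, map_sum]
  simp [xB_apply]

lemma lastFactor_ι_mul_embV (v : Fin n → k) (t : (Fin n → k) ⊗[k] (Fin n → k)) :
    lastFactor (xB k n M δ₀) (TensorAlgebra.ι k v * embV k n t)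
      = xB k n M δ₀ v • (xB k n M δ₀).rTensor (Fin n → k) t := by
  induction t using TensorProduct.induction_on with
  | zero => simp
  | tmul a b =>
    rw [embV_tmul, ← mul_assoc, lastFactor_mul_ι, map_mul, TensorAlgebra.lift_ι_apply,
      TensorAlgebra.lift_ι_apply, LinearMap.rTensor_tmul, smul_tmul', smul_eq_mul]
  | add s t hs ht => simp [mul_add, hs, ht]

lemma lastFactor_δ_ι_mul_ι
    (δ : TensorAlgebra k (Fin n → k) →ₗ[k] TensorAlgebra k (Fin n → k))
    (hLeib : ∀ a b, δ (a * b) = δ a * b + a * δ b)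
    (hδι : ∀ v : Fin n → k, δ (TensorAlgebra.ι k v) = embV k n (δ₀ v)) (v w : Fin n → k) :
    lastFactor (xB k n M δ₀) (δ (TensorAlgebra.ι k v * TensorAlgebra.ι k w))
      = (zB k n M δ₀ * xB k n M δ₀ v) ⊗ₜ w
        - xB k n M δ₀ v • (zB k n M δ₀ ⊗ₜ w - (xB k n M δ₀).rTensor (Fin n → k) (δ₀ w)) := by
  rw [hLeib, hδι, hδι, map_add, lastFactor_mul_ι, lastFactor_ι_mul_embV, ← zB_mul_xB_sub,
    sub_tmul, smul_sub, smul_tmul', smul_eq_mul]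
  abel

lemma rTV_eq_sum_u_mul_x :
    rTV k n M = ∑ p : Fin n, TensorAlgebra.ι k (u k n M p) * TensorAlgebra.ι k (x k n p) := by
  simp only [rTV, u, map_sum, map_smul, Finset.sum_mul, smul_mul_assoc]
  exact Finset.sum_comm

theorem lifting_complex_morphism
    (δ : TensorAlgebra k (Fin n → k) →ₗ[k] TensorAlgebra k (Fin n → k))
    (hLeib : ∀ a b, δ (a * b) = δ a * b + a * δ b)
    (hδι : ∀ v : Fin n → k, δ (TensorAlgebra.ι k v) = embV k n (δ₀ v))
    (hδr : δ (rTV k n M) = 0)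
    (y : Fin n → Fin n → (Fin n → k))
    (hy : ∀ i, δ₀ (x k n i) = ∑ j : Fin n, (y i j) ⊗ₜ (x k n j))
    -- the left B-module maps of the two complexes
    (d1 : B k n M δ₀ ⊗[k] (Fin n → k) →ₗ[B k n M δ₀] B k n M δ₀)
    (hd1 : ∀ v : Fin n → k,
      d1 ((1 : B k n M δ₀) ⊗ₜ v) = πB k n M δ₀ (TensorAlgebra.ι k (inc k n v)))
    (d2 : B k n M δ₀ →ₗ[B k n M δ₀] B k n M δ₀ ⊗[k] (Fin n → k))
    (hd2 : d2 1 = ∑ i : Fin n,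
      (πB k n M δ₀ (TensorAlgebra.ι k (inc k n (u k n M i)))) ⊗ₜ (x k n i))
    (f0 : B k n M δ₀ →ₗ[B k n M δ₀] B k n M δ₀)
    (hf0 : f0 1 = zB k n M δ₀)
    (f1 : B k n M δ₀ ⊗[k] (Fin n → k) →ₗ[B k n M δ₀] B k n M δ₀ ⊗[k] (Fin n → k))
    (hf1 : ∀ i : Fin n,
      f1 ((1 : B k n M δ₀) ⊗ₜ x k n i)
        = zB k n M δ₀ ⊗ₜ x k n i
          - ∑ j : Fin n,
              (πB k n M δ₀ (TensorAlgebra.ι k (inc k n (y i j)))) ⊗ₜ x k n j)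
    (f2 : B k n M δ₀ →ₗ[B k n M δ₀] B k n M δ₀)
    (hf2 : f2 1 = zB k n M δ₀) :
    d1 ∘ₗ f1 = f0 ∘ₗ d1 ∧ d2 ∘ₗ f2 = f1 ∘ₗ d2 := by
  have hf0' (b : B k n M δ₀) : f0 b = b * zB k n M δ₀ := by simpa [hf0] using f0.map_smul b 1
  refine ⟨TensorProduct.AlgebraTensorModule.ext fun b v => ?_, LinearMap.ext_ring ?_⟩
  · simp only [LinearMap.comp_apply, map_tmul_eq_smul f1 b, map_tmul_eq_smul d1 b, map_smul,
      f1_one_tmul k n M δ₀ y hy f1 hf1, map_sub, map_tmul_eq_smul d1 (zB k n M δ₀), hd1,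
      d1_rTensor k n M δ₀ d1 hd1, ← xB_apply, ← zB_mul_xB_sub, hf0', smul_eq_mul, sub_sub_cancel,
      mul_assoc]
  · rw [LinearMap.comp_apply, LinearMap.comp_apply, hf2, ← sub_eq_zero]
    calc d2 (zB k n M δ₀) - f1 (d2 1)
        = ∑ p, lastFactor (xB k n M δ₀)
            (δ (TensorAlgebra.ι k (u k n M p) * TensorAlgebra.ι k (x k n p))) := by
          rw [← mul_one (zB k n M δ₀), ← smul_eq_mul, map_smul, hd2, Finset.smul_sum, map_sum]
          rw [← Finset.sum_sub_distrib (G := B k n M δ₀ ⊗[k] (Fin n → k))]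
          refine Finset.sum_congr rfl fun p _ => ?_
          rw [lastFactor_δ_ι_mul_ι k n M δ₀ δ hLeib hδι, ← f1_one_tmul k n M δ₀ y hy f1 hf1,
            smul_tmul', smul_eq_mul, map_tmul_eq_smul f1, xB_apply]
      _ = 0 := by rw [← map_sum, ← map_sum, ← rTV_eq_sum_u_mul_x, hδr, map_zero]

end
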